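/- Let n ≥ 1, let p : Fin n → ℝ be a probability vector (p i ≥ 0 for all i and ∑ i, p i = 1), and let d : Fin n → Fin n → ℝ satisfy d i j ≥ 0 for all i, j and d i j = 0 if and only if i = j. Then the expected communication distance ∑ i, ∑ j, p i * d i j * p j equals 0 if and only if there exists an index i₀ such that p i₀ = 1 and p j = 0 for all j ≠ i₀. (In the paper's terms: a grammar is optimal if and only if it has exactly one fixed word order.) -/

import Mathlib

open Finset

theorem sum_sum_mul_mul_eq_zero_iff_pairwise {ι R : Type*} [Fintype ι] [Semiring R]
    [PartialOrder R] [IsOrderedRing R] [NoZeroDivisors R] {p : ι → R} {d : ι → ι → R}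
    (hp0 : ∀ i, 0 ≤ p i) (hd0 : ∀ i j, 0 ≤ d i j) (hd : ∀ i j, d i j = 0 ↔ i = j) :
    ∑ i, ∑ j, p i * d i j * p j = 0 ↔ Pairwise fun i j ↦ p i = 0 ∨ p j = 0 := by
  have hterm (i j : ι) : 0 ≤ p i * d i j * p j :=
    mul_nonneg (mul_nonneg (hp0 i) (hd0 i j)) (hp0 j)
  have hrow (i : ι) : 0 ≤ ∑ j, p i * d i j * p j := sum_nonneg fun j _ ↦ hterm i j
  rw [sum_eq_zero_iff_of_nonneg fun i _ ↦ hrow i]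
  simp only [sum_eq_zero_iff_of_nonneg fun j _ ↦ hterm _ j, mem_univ, true_imp_iff]
  refine forall_congr' fun i ↦ forall_congr' fun j ↦ ?_
  rw [mul_eq_zero, mul_eq_zero, hd]
  tauto

theorem pairwise_eq_zero_or_eq_zero_iff_of_sum_eq_one {ι M : Type*} [Fintype ι]
    [AddCommMonoidWithOne M] [NeZero (1 : M)] {p : ι → M} (hp1 : ∑ i, p i = 1) :
    (Pairwise fun i j ↦ p i = 0 ∨ p j = 0) ↔ ∃ i₀, p i₀ = 1 ∧ ∀ j, j ≠ i₀ → p j = 0 := by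
  constructor
  · intro h
    obtain ⟨i₀, hi₀⟩ : ∃ i₀, p i₀ ≠ 0 := by
      by_contra! hzero
      simp [hzero] at hp1
    have hrest (j : ι) (hj : j ≠ i₀) : p j = 0 := (h hj.symm).resolve_left hi₀
    exact ⟨i₀, hp1 ▸ (Fintype.sum_eq_single i₀ hrest).symm, hrest⟩
  · rintro ⟨i₀, -, hrest⟩ i j hij
    by_cases hi : i = i₀
    · exact .inr (hrest j (hi ▸ hij.symm))
    · exact .inl (hrest i hi)

theorem optimal_grammar_iff_fixed_word_order_general
    (n : ℕ)
    (p : Fin n → ℝ) (hp0 : ∀ i, 0 ≤ p i) (hp1 : ∑ i, p i = 1)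
    (d : Fin n → Fin n → ℝ)
    (hd0 : ∀ i j, 0 ≤ d i j) (hd : ∀ i j, d i j = 0 ↔ i = j) :
    (∑ i, ∑ j, p i * d i j * p j = 0) ↔
      ∃ i₀ : Fin n, p i₀ = 1 ∧ ∀ j, j ≠ i₀ → p j = 0 := by
  rw [sum_sum_mul_mul_eq_zero_iff_pairwise hp0 hd0 hd,
    pairwise_eq_zero_or_eq_zero_iff_of_sum_eq_one hp1]

theorem optimal_grammar_iff_fixed_word_order
    (n : ℕ) (hn : 1 ≤ n)
    (p : Fin n → ℝ) (hp0 : ∀ i, 0 ≤ p i) (hp1 : ∑ i, p i = 1)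
    (d : Fin n → Fin n → ℝ)
    (hd0 : ∀ i j, 0 ≤ d i j) (hd : ∀ i j, d i j = 0 ↔ i = j) :
    (∑ i, ∑ j, p i * d i j * p j = 0) ↔
      ∃ i₀ : Fin n, p i₀ = 1 ∧ ∀ j, j ≠ i₀ → p j = 0 :=
  optimal_grammar_iff_fixed_word_order_general n p hp0 hp1 d hd0 hd
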